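/- Let N ∈ ℕ and r : Fin N → ℝ with r_i > 0 for all i, and define PWR : EuclideanSpace ℝ (Fin N) → ℝ by PWR(φ) = |∑_i r_i · exp(φ_i · I)|². If φ is a critical point of PWR (fderiv ℝ PWR φ = 0) and PWR(φ) is strictly greater than the infimum of PWR over EuclideanSpace ℝ (Fin N), then φ is a strict saddle point: there exists a direction v ∈ EuclideanSpace ℝ (Fin N) along which the second derivative of PWR at φ is strictly negative, i.e. iteratedFDeriv ℝ 2 PWR φ evaluated at (v, v) is < 0. (Paper's Lemma 7: every critical point not achieving the global minimum is a strict saddle.) -/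

import Mathlib

/-!
Write `S(φ) = ∑ rⱼ e^{iφⱼ}`, so that `PWR = ‖S‖²`. Along the line `φ + t v` the second derivative
of `‖S‖²` at `t = 0` is `2 (‖∑ rⱼ vⱼ e^{iφⱼ}‖² - ∑ rⱼ vⱼ² ⟪S, e^{iφⱼ}⟫)`.

At a critical point with `S ≠ 0`, each phasor `e^{iφⱼ}` is `±S/‖S‖`, and at least one of them,
say `e^{iφₚ}`, points along `S`. If a second one `e^{iφ_q}` does too, the direction
`v = r_q δₚ - rₚ δ_q` kills the first term, and the Hessian becomes `-2 rₚ r_q (rₚ + r_q) ‖S‖ < 0`.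
Otherwise all other phasors point against `S`, so `‖S(φ)‖ = rₚ - ∑_{j ≠ p} rⱼ`. By the triangle
inequality this is a lower bound for every `‖S(ψ)‖`, so `φ` is a global minimum.
-/

open Complex ComplexConjugate

theorem iteratedFDeriv_two_apply_self_eq_deriv_deriv {E F : Type*} [NormedAddCommGroup E]
    [NormedSpace ℝ E] [NormedAddCommGroup F] [NormedSpace ℝ F] {f : E → F} (hf : ContDiff ℝ 2 f)
    (x v : E) : iteratedFDeriv ℝ 2 f x ![v, v] = deriv (deriv fun t : ℝ => f (x + t • v)) 0 := by
  have hline : (fun t : ℝ => f (x + t • v)) =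
      (fun y => f (x + y)) ∘ ContinuousLinearMap.toSpanSingleton ℝ v := by
    ext t
    simp
  have hshift : ContDiff ℝ 2 fun y => f (x + y) := hf.comp (contDiff_const.add contDiff_id)
  rw [← iteratedDeriv_one (f := fun t : ℝ => f (x + t • v)), ← iteratedDeriv_succ,
    iteratedDeriv_eq_iteratedFDeriv, hline,
    (ContinuousLinearMap.toSpanSingleton ℝ v).iteratedFDeriv_comp_right hshift 0 le_rfl,
    iteratedFDeriv_comp_add_left]
  simp only [Nat.reduceAdd, ContinuousLinearMap.toSpanSingleton_apply, zero_smul, add_zero,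
    ContinuousMultilinearMap.compContinuousLinearMap_apply, one_smul]
  congr 1
  ext i
  fin_cases i <;> rfl

section NormSq

variable {F : Type*} [NormedAddCommGroup F] [InnerProductSpace ℝ F] {z z' : ℝ → F}

theorem deriv_norm_sq_eq (hz : ∀ t, HasDerivAt z (z' t) t) :
    deriv (fun t => ‖z t‖ ^ 2) = fun t => 2 * inner ℝ (z t) (z' t) :=
  funext fun t => (hz t).norm_sq.deriv

theorem deriv_deriv_norm_sq {z'' : F} {t : ℝ} (hz : ∀ s, HasDerivAt z (z' s) s)
    (hz' : HasDerivAt z' z'' t) :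
    deriv (deriv fun s => ‖z s‖ ^ 2) t = 2 * (‖z' t‖ ^ 2 + inner ℝ (z t) z'') := by
  rw [deriv_norm_sq_eq hz, (((hz t).inner ℝ hz').const_mul 2).deriv, real_inner_comm (z' t),
    real_inner_self_eq_norm_sq]
  ring

end NormSq

theorem hasDerivAt_sum_mul_exp {ι : Type*} [Fintype ι] (c w : ι → ℂ) (t : ℝ) :
    HasDerivAt (fun t : ℝ => ∑ j, c j * cexp (w j * t)) (∑ j, c j * w j * cexp (w j * t)) t := by
  refine HasDerivAt.fun_sum fun j _ => ?_
  have h := (((hasDerivAt_id (t : ℂ)).const_mul (w j)).cexp.comp_ofReal).const_mul (c j)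
  simp only [id, mul_one] at h
  exact h.congr_deriv (by ring)

theorem Complex.eq_or_eq_neg_of_inner_I_mul_eq_zero {z e : ℂ} (hz : z ≠ 0) (he : ‖e‖ = 1)
    (h : inner ℝ z (I * e) = 0) : e = z / ‖z‖ ∨ e = -(z / ‖z‖) := by
  set a := (e * conj z).re
  have hreal : e * conj z = a := by
    refine Complex.ext rfl ?_
    simp only [Complex.inner, mul_re, mul_im, I_re, I_im, conj_re, conj_im] at h
    simp only [mul_im, conj_re, conj_im, ofReal_im]
    linarith
  have ha : |a| = ‖z‖ := by
    have := congrArg norm hreal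
    rwa [norm_mul, norm_conj, he, one_mul, norm_real, Real.norm_eq_abs, eq_comm] at this
  have hz' : (‖z‖ : ℂ) ≠ 0 := by exact_mod_cast norm_ne_zero_iff.2 hz
  have hez : e * ‖z‖ ^ 2 = a * z := by
    rw [← hreal, mul_assoc, ← conj_mul', mul_comm (conj z)]
  rcases abs_eq (norm_nonneg z) |>.1 ha with ha | ha
  · left
    rw [ha] at hez
    field_simp
    exact mul_right_cancel₀ hz' (by linear_combination hez)
  · right
    rw [ha, ofReal_neg] at hez
    field_simp
    exact mul_right_cancel₀ hz' (by linear_combination hez)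

section PhasorSum

variable {ι : Type*} [Fintype ι]

noncomputable def phasorSum (r : ι → ℝ) (φ : EuclideanSpace ℝ ι) : ℂ :=
  ∑ i, (r i : ℂ) * cexp (φ i * I)

theorem phasorSum_add_smul (r : ι → ℝ) (φ v : EuclideanSpace ℝ ι) (t : ℝ) :
    phasorSum r (φ + t • v) = ∑ j, r j * cexp (φ j * I) * cexp (v j * I * t) := by
  refine Finset.sum_congr rfl fun j _ => ?_
  rw [mul_assoc, ← Complex.exp_add, PiLp.add_apply, PiLp.smul_apply, smul_eq_mul]
  push_cast
  ring_nf

theorem inner_phasorSum (r : ι → ℝ) (φ : EuclideanSpace ℝ ι) (z : ℂ) :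
    inner ℝ z (phasorSum r φ) = ∑ j, r j * inner ℝ z (cexp (φ j * I)) := by
  simp only [phasorSum, inner_sum, ← real_smul, real_inner_smul_right]

theorem contDiff_norm_sq_phasorSum (r : ι → ℝ) :
    ContDiff ℝ 2 fun ψ : EuclideanSpace ℝ ι => ‖phasorSum r ψ‖ ^ 2 :=
  (contDiff_norm_sq ℝ).comp <| ContDiff.sum fun i _ => contDiff_const.mul <|
    ((ofRealCLM.contDiff.comp (EuclideanSpace.proj i).contDiff).mul contDiff_const).cexp

theorem fderiv_norm_sq_phasorSum_apply (r : ι → ℝ) (φ v : EuclideanSpace ℝ ι) :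
    fderiv ℝ (fun ψ => ‖phasorSum r ψ‖ ^ 2) φ v =
      2 * inner ℝ (phasorSum r φ) (I * ∑ j, r j * v j * cexp (φ j * I)) := by
  rw [← ((contDiff_norm_sq_phasorSum r).differentiable two_ne_zero φ).lineDeriv_eq_fderiv,
    lineDeriv]
  simp only [phasorSum_add_smul]
  rw [deriv_norm_sq_eq (hasDerivAt_sum_mul_exp _ _)]
  simp only [ofReal_zero, mul_zero, Complex.exp_zero, mul_one]
  congr 2
  rw [Finset.mul_sum]
  exact Finset.sum_congr rfl fun j _ => by ring

theorem iteratedFDeriv_two_norm_sq_phasorSum_apply (r : ι → ℝ) (φ v : EuclideanSpace ℝ ι) :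
    iteratedFDeriv ℝ 2 (fun ψ => ‖phasorSum r ψ‖ ^ 2) φ ![v, v] =
      2 * (‖∑ j, r j * v j * cexp (φ j * I)‖ ^ 2 -
        ∑ j, r j * v j ^ 2 * inner ℝ (phasorSum r φ) (cexp (φ j * I))) := by
  rw [iteratedFDeriv_two_apply_self_eq_deriv_deriv (contDiff_norm_sq_phasorSum r)]
  simp only [phasorSum_add_smul]
  rw [deriv_deriv_norm_sq (hasDerivAt_sum_mul_exp _ _) (hasDerivAt_sum_mul_exp _ _ 0)]
  simp only [ofReal_zero, mul_zero, Complex.exp_zero, mul_one]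
  have hfirst : ∑ j, r j * cexp (φ j * I) * (v j * I) = I * ∑ j, r j * v j * cexp (φ j * I) := by
    rw [Finset.mul_sum]
    exact Finset.sum_congr rfl fun j _ => by ring
  have hsecond : ∑ j, r j * cexp (φ j * I) * (v j * I) * (v j * I) =
      ∑ j, ((-(r j * v j ^ 2) : ℝ) : ℂ) * cexp (φ j * I) :=
    Finset.sum_congr rfl fun j _ => by
      push_cast
      linear_combination (r j * v j ^ 2 * cexp (φ j * I)) * I_sq
  rw [hfirst, hsecond, norm_mul, norm_I, one_mul, inner_sum, sub_eq_add_neg,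
    ← Finset.sum_neg_distrib]
  simp only [← real_smul, real_inner_smul_right, neg_mul]
  rfl

theorem inner_phasorSum_I_mul_exp_eq_zero [DecidableEq ι] {r : ι → ℝ} {j : ι} (hj : r j ≠ 0)
    {φ : EuclideanSpace ℝ ι} (hcrit : fderiv ℝ (fun ψ => ‖phasorSum r ψ‖ ^ 2) φ = 0) :
    inner ℝ (phasorSum r φ) (I * cexp (φ j * I)) = 0 := by
  have h := fderiv_norm_sq_phasorSum_apply r φ (EuclideanSpace.single j 1)
  have hsingle : ∑ k, (r k : ℂ) * (EuclideanSpace.single j (1 : ℝ) k : ℂ) * cexp (φ k * I) =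
      r j * cexp (φ j * I) := by
    simp [PiLp.single_apply, apply_ite]
  rw [hcrit, hsingle, mul_left_comm, ← real_smul, real_inner_smul_right, zero_apply] at h
  simpa [hj] using h.symm

theorem exp_eq_or_eq_neg_of_fderiv_eq_zero [DecidableEq ι] {r : ι → ℝ} {j k : ι} (hj : r j ≠ 0)
    (hk : r k ≠ 0) {φ : EuclideanSpace ℝ ι}
    (hcrit : fderiv ℝ (fun ψ => ‖phasorSum r ψ‖ ^ 2) φ = 0) (hS : phasorSum r φ ≠ 0) :
    cexp (φ j * I) = cexp (φ k * I) ∨ cexp (φ j * I) = -cexp (φ k * I) := by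
  have align {i : ι} (hi : r i ≠ 0) := Complex.eq_or_eq_neg_of_inner_I_mul_eq_zero hS
    (norm_exp_ofReal_mul_I (φ i)) (inner_phasorSum_I_mul_exp_eq_zero hi hcrit)
  rcases align hj with hj' | hj' <;> rcases align hk with hk' | hk' <;> simp [hj', hk']

theorem exists_pos_inner_phasorSum_exp {r : ι → ℝ} (hr : ∀ i, 0 ≤ r i)
    {φ : EuclideanSpace ℝ ι} (hS : phasorSum r φ ≠ 0) :
    ∃ p, 0 < inner ℝ (phasorSum r φ) (cexp (φ p * I)) := by
  by_contra! h
  have : ‖phasorSum r φ‖ ^ 2 ≤ 0 := by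
    rw [← real_inner_self_eq_norm_sq, inner_phasorSum]
    exact Finset.sum_nonpos fun j _ => mul_nonpos_of_nonneg_of_nonpos (hr j) (h j)
  exact hS (by simpa using this)

theorem exists_iteratedFDeriv_two_norm_sq_phasorSum_neg [DecidableEq ι] {r : ι → ℝ} {p q : ι}
    (hp : 0 < r p) (hq : 0 < r q) (hpq : p ≠ q) {φ : EuclideanSpace ℝ ι}
    (hparallel : cexp (φ p * I) = cexp (φ q * I))
    (hpos : 0 < inner ℝ (phasorSum r φ) (cexp (φ p * I))) :
    ∃ v, iteratedFDeriv ℝ 2 (fun ψ => ‖phasorSum r ψ‖ ^ 2) φ ![v, v] < 0 := by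
  set v := EuclideanSpace.single p (r q) - EuclideanSpace.single q (r p)
  have hv (j : ι) : v j = (if j = p then r q else 0) - (if j = q then r p else 0) := by
    simp [v, PiLp.single_apply]
  have hsum {M : Type} [AddCommMonoid M] (f : ι → ℝ → M) (hf : ∀ j, f j 0 = 0) :
      ∑ j, f j (v j) = f p (r q) + f q (-r p) := by
    rw [Fintype.sum_eq_add p q hpq fun j hj => by simp [hv, hj.1, hj.2, hf]]
    simp [hv, hpq, hpq.symm]
  have hfirst : ∑ j, (r j : ℂ) * (v j : ℂ) * cexp (φ j * I) = 0 :=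
    (hsum (fun j x => (r j : ℂ) * x * cexp (φ j * I)) (by simp)).trans
      (by rw [hparallel]; push_cast; ring)
  have hsecond : ∑ j, r j * v j ^ 2 * inner ℝ (phasorSum r φ) (cexp (φ j * I)) =
      r p * r q * (r p + r q) * inner ℝ (phasorSum r φ) (cexp (φ p * I)) :=
    (hsum (fun j x => r j * x ^ 2 * inner ℝ (phasorSum r φ) (cexp (φ j * I))) (by simp)).trans
      (by rw [← hparallel]; ring)
  refine ⟨v, ?_⟩
  rw [iteratedFDeriv_two_norm_sq_phasorSum_apply, hfirst, hsecond, norm_zero]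
  have := mul_pos (mul_pos (mul_pos hp hq) (add_pos hp hq)) hpos
  linarith

theorem sub_sum_erase_le_norm_phasorSum [DecidableEq ι] {r : ι → ℝ} (hr : ∀ i, 0 ≤ r i)
    (p : ι) (ψ : EuclideanSpace ℝ ι) :
    r p - ∑ j ∈ Finset.univ.erase p, r j ≤ ‖phasorSum r ψ‖ := by
  have hnorm (j : ι) : ‖(r j : ℂ) * cexp (ψ j * I)‖ = r j := by
    rw [norm_mul, norm_exp_ofReal_mul_I, mul_one, norm_real, Real.norm_of_nonneg (hr j)]
  set rest := ∑ j ∈ Finset.univ.erase p, (r j : ℂ) * cexp (ψ j * I)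
  calc r p - ∑ j ∈ Finset.univ.erase p, r j
      ≤ ‖(r p : ℂ) * cexp (ψ p * I)‖ - ‖rest‖ := by
        rw [hnorm]
        gcongr
        exact (norm_sum_le _ _).trans_eq (Finset.sum_congr rfl fun j _ => hnorm j)
    _ ≤ ‖(r p : ℂ) * cexp (ψ p * I) + rest‖ := by
        simpa using norm_sub_norm_le ((r p : ℂ) * cexp (ψ p * I)) (-rest)
    _ = ‖phasorSum r ψ‖ := by
        rw [phasorSum, ← Finset.add_sum_erase _ _ (Finset.mem_univ p)]

theorem norm_phasorSum_le_of_antipodal [DecidableEq ι] {r : ι → ℝ} (hr : ∀ i, 0 ≤ r i)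
    {φ : EuclideanSpace ℝ ι} {p : ι} (hanti : ∀ j ≠ p, cexp (φ j * I) = -cexp (φ p * I))
    (hpos : 0 ≤ inner ℝ (phasorSum r φ) (cexp (φ p * I))) (ψ : EuclideanSpace ℝ ι) :
    ‖phasorSum r φ‖ ≤ ‖phasorSum r ψ‖ := by
  have hS : phasorSum r φ =
      ((r p - ∑ j ∈ Finset.univ.erase p, r j : ℝ) : ℂ) * cexp (φ p * I) := by
    rw [phasorSum, ← Finset.add_sum_erase _ _ (Finset.mem_univ p),
      Finset.sum_congr rfl fun j hj => by rw [hanti j (Finset.ne_of_mem_erase hj)]]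
    push_cast
    simp only [mul_neg, Finset.sum_neg_distrib, ← Finset.sum_mul]
    ring
  rw [hS, ← real_smul, real_inner_smul_left, real_inner_self_eq_norm_sq,
    norm_exp_ofReal_mul_I, one_pow, mul_one] at hpos
  rw [hS, norm_mul, norm_exp_ofReal_mul_I, mul_one, norm_real, Real.norm_of_nonneg hpos]
  exact sub_sum_erase_le_norm_phasorSum hr p ψ

end PhasorSum

/-- Paper's Lemma 7: every critical point of `PWR` not achieving the global minimum
is a strict saddle point. -/
theorem critical_point_not_min_strict_saddle (N : ℕ) (r : Fin N → ℝ) (hr : ∀ i, 0 < r i)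
    (PWR : EuclideanSpace ℝ (Fin N) → ℝ)
    (hPWR : ∀ φ : EuclideanSpace ℝ (Fin N),
      PWR φ = ‖∑ i, (r i : ℂ) * Complex.exp ((φ i : ℂ) * Complex.I)‖ ^ 2)
    (φ : EuclideanSpace ℝ (Fin N))
    (hcrit : fderiv ℝ PWR φ = 0)
    (hmin : (⨅ ψ : EuclideanSpace ℝ (Fin N), PWR ψ) < PWR φ) :
    ∃ v : EuclideanSpace ℝ (Fin N), iteratedFDeriv ℝ 2 PWR φ ![v, v] < 0 := by
  obtain rfl : PWR = fun ψ => ‖phasorSum r ψ‖ ^ 2 := funext hPWR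
  have hS : phasorSum r φ ≠ 0 := by
    intro hS
    have : 0 ≤ ⨅ ψ, ‖phasorSum r ψ‖ ^ 2 := le_ciInf fun ψ => by positivity
    simp only [hS, norm_zero] at hmin
    linarith
  obtain ⟨p, hp⟩ := exists_pos_inner_phasorSum_exp (fun i => (hr i).le) hS
  by_cases hparallel : ∃ q ≠ p, cexp (φ q * I) = cexp (φ p * I)
  · obtain ⟨q, hqp, hq⟩ := hparallel
    exact exists_iteratedFDeriv_two_norm_sq_phasorSum_neg (hr p) (hr q) hqp.symm hq.symm hp
  · push Not at hparallel
    have hanti (q : Fin N) (hq : q ≠ p) : cexp (φ q * I) = -cexp (φ p * I) :=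
      (exp_eq_or_eq_neg_of_fderiv_eq_zero (hr q).ne' (hr p).ne' hcrit hS).resolve_left
        (hparallel q hq)
    have hglobal := norm_phasorSum_le_of_antipodal (fun i => (hr i).le) hanti hp.le
    exact absurd hmin (not_lt.2 (le_ciInf fun ψ => pow_le_pow_left₀ (norm_nonneg _) (hglobal ψ) 2))
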